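/- Define φ ∈ ℚ(t)(x) by φ(x) = ((t + t² − t³)x − t²)/((t³ − t² − t + 1)x² − (t³ − t² − t)x − t²), and set A = 1/(1−t), B = −t/(t² − t − 1), Q = t/(1−t²) in ℚ(t). Then over ℚ(t): the orbit of 0 under φ is the 4-cycle 0 ↦ 1 ↦ t ↦ B ↦ 0, and moreover φ(∞) = 0, φ(A) = B, and φ(Q) = t, while ∞, A, Q are not in the 4-cycle {0, 1, t, B}. -/

import Mathlib

/-!
Describe `A`, `B`, `Q` by the linear equations they solve: `A(1 − t) = 1`, `B(t² − t − 1) = −t`,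
`Q(1 − t²) = t`. After clearing the denominator of `φ`, each claimed value `φ(x) = y` becomes a
polynomial identity that follows from these equations, and each distinctness claim reduces to
the non-vanishing of one of `t`, `t² − 1`, `t² − t ± 1`, `t² + t − 1`. So everything holds over
any field in which `t` avoids the roots of these polynomials, as `t = X` does in `ℚ(X)`.
-/

noncomputable section
open scoped Classical

/-- `Option K` models `ℙ¹(K)`, with `none = ∞`; since the denominator has larger degree,
`φ(∞) = 0`. -/
def phiT {K : Type*} [Field K] (t : K) : Option K → Option K
  | none => some 0
  | some x =>
      if (t^3 - t^2 - t + 1)*x^2 - (t^3 - t^2 - t)*x - t^2 = 0 then none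
      else some (((t + t^2 - t^3)*x - t^2) /
        ((t^3 - t^2 - t + 1)*x^2 - (t^3 - t^2 - t)*x - t^2))

open Polynomial

section

variable {K : Type*} [Field K] {t : K}

def phiNum (t x : K) : K := (t + t^2 - t^3)*x - t^2

def phiDen (t x : K) : K := (t^3 - t^2 - t + 1)*x^2 - (t^3 - t^2 - t)*x - t^2

theorem phiT_some_eq_some {x y : K} (hd : phiDen t x ≠ 0) (h : phiNum t x = y * phiDen t x) :
    phiT t (some x) = some y := by
  unfold phiDen phiNum at *
  rw [phiT, if_neg hd]
  exact congrArg some ((div_eq_iff hd).2 h)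

theorem phiT_zero (h0 : t ≠ 0) : phiT t (some 0) = some 1 :=
  phiT_some_eq_some (by simpa [phiDen] using h0) (by simp [phiNum, phiDen])

theorem phiT_one (h2 : t ^ 2 ≠ 1) : phiT t (some 1) = some t := by
  have hd : phiDen t 1 = 1 - t ^ 2 := by unfold phiDen; ring
  refine phiT_some_eq_some (hd ▸ sub_ne_zero.2 h2.symm) ?_
  rw [hd, phiNum]; ring

theorem phiT_self (h0 : t ≠ 0) (h1 : t ≠ 1) {B : K} (hB : B * (t ^ 2 - t - 1) = -t) :
    phiT t (some t) = some B := by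
  have hs : t ^ 2 - t - 1 ≠ 0 := fun h => h0 (by simpa [h] using hB)
  have hd : phiDen t t = t ^ 2 * (t - 1) * (t ^ 2 - t - 1) := by unfold phiDen; ring
  refine phiT_some_eq_some
    (hd ▸ mul_ne_zero (mul_ne_zero (pow_ne_zero 2 h0) (sub_ne_zero.2 h1)) hs) ?_
  rw [hd, phiNum]; linear_combination (-(t ^ 2 * (t - 1))) * hB

theorem phiT_eq_zero_of_mul_eq_neg (h0 : t ≠ 0) (h2 : t ^ 2 ≠ 1) {B : K}
    (hB : B * (t ^ 2 - t - 1) = -t) : phiT t (some B) = some 0 := by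
  have hd : phiDen t B * (t ^ 2 - t - 1) ^ 2 = t ^ 2 * ((t ^ 2 - 1) * (t - 1)) := by
    unfold phiDen
    linear_combination
      ((t ^ 2 - 1) * (t - 1) * (B * (t ^ 2 - t - 1) - t) - t * (t ^ 2 - t - 1) ^ 2) * hB
  have h1 : t - 1 ≠ 0 := sub_ne_zero.2 (by rintro rfl; simp at h2)
  have hc : t ^ 2 * ((t ^ 2 - 1) * (t - 1)) ≠ 0 :=
    mul_ne_zero (pow_ne_zero 2 h0) (mul_ne_zero (sub_ne_zero.2 h2) h1)
  refine phiT_some_eq_some (left_ne_zero_of_mul (hd ▸ hc)) ?_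
  rw [phiNum, zero_mul]; linear_combination (-t) * hB

theorem phiT_of_mul_one_sub_eq_one (h0 : t ≠ 0) {A B : K} (hA : A * (1 - t) = 1)
    (hB : B * (t ^ 2 - t - 1) = -t) : phiT t (some A) = some B := by
  have h1 : 1 - t ≠ 0 := right_ne_zero_of_mul_eq_one hA
  have hs : t ^ 2 - t - 1 ≠ 0 := fun h => h0 (by simpa [h] using hB)
  have hd : phiDen t A * (1 - t) = -(t ^ 2 - t - 1) := by
    unfold phiDen
    linear_combination ((1 + t) * (1 - t) * (1 + A * (1 - t)) - t * (t ^ 2 - t - 1)) * hA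
  refine phiT_some_eq_some (left_ne_zero_of_mul (hd ▸ neg_ne_zero.2 hs))
    (mul_right_cancel₀ h1 ?_)
  rw [mul_assoc, hd, phiNum]
  linear_combination (-t * (t ^ 2 - t - 1)) * hA + hB

theorem phiT_of_mul_one_sub_sq_eq_self (h0 : t ≠ 0) {Q : K} (hQ : Q * (1 - t ^ 2) = t) :
    phiT t (some Q) = some t := by
  have h2 : 1 - t ^ 2 ≠ 0 := by rintro h; simp [h, eq_comm, h0] at hQ
  have hd : phiDen t Q * (1 - t ^ 2) = t ^ 2 := by
    unfold phiDen
    linear_combination ((1 - t) * (t + Q * (1 - t ^ 2)) - t * (t ^ 2 - t - 1)) * hQ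
  refine phiT_some_eq_some (left_ne_zero_of_mul (hd ▸ pow_ne_zero 2 h0))
    (mul_right_cancel₀ h2 ?_)
  rw [mul_assoc, hd, phiNum]
  linear_combination (-t * (t ^ 2 - t - 1)) * hQ

theorem pairwise_ne_cycle (h0 : t ≠ 0) (h2 : t ^ 2 ≠ 1) {B : K}
    (hB : B * (t ^ 2 - t - 1) = -t) :
    ([some 0, some 1, some t, some B] : List (Option K)).Pairwise (· ≠ ·) := by
  have h1 : t ≠ 1 := by rintro rfl; simp at h2
  have hB0 : B ≠ 0 := by rintro rfl; exact h0 (by linear_combination hB)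
  have hB1 : B ≠ 1 := by rintro rfl; exact h2 (by linear_combination hB)
  have hBt : B ≠ t := by
    rintro rfl
    have : B ^ 2 * (B - 1) = 0 := by linear_combination hB
    simp [sub_eq_zero, h0, h1] at this
  simp [h0.symm, h1.symm, hB0.symm, hB1.symm, hBt.symm]

theorem some_notMem_cycle_of_mul_one_sub_eq_one (h0 : t ≠ 0) (hA' : t ^ 2 - t + 1 ≠ 0)
    {A B : K} (hA : A * (1 - t) = 1) (hB : B * (t ^ 2 - t - 1) = -t) :
    some A ∉ ({some 0, some 1, some t, some B} : Set (Option K)) := by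
  have hA0 : A ≠ 0 := left_ne_zero_of_mul_eq_one hA
  have hA1 : A ≠ 1 := by rintro rfl; exact h0 (by linear_combination -hA)
  have hAt : A ≠ t := by rintro rfl; exact hA' (by linear_combination -hA)
  -- `A·(t² − t − 1) = −t·A(1 − t) − A`, so `A = B` would force `A = 0`
  have hAB : A ≠ B := by rintro rfl; exact hA0 (by linear_combination -t * hA - hB)
  simp [hA0, hA1, hAt, hAB]

theorem some_notMem_cycle_of_mul_one_sub_sq_eq_self (h0 : t ≠ 0) (hQ' : t ^ 2 + t - 1 ≠ 0)
    {B Q : K} (hQ : Q * (1 - t ^ 2) = t) (hB : B * (t ^ 2 - t - 1) = -t) :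
    some Q ∉ ({some 0, some 1, some t, some B} : Set (Option K)) := by
  have hQ0 : Q ≠ 0 := by rintro rfl; exact h0 (by linear_combination -hQ)
  have hQ1 : Q ≠ 1 := by rintro rfl; exact hQ' (by linear_combination -hQ)
  have hQt : Q ≠ t := by
    rintro rfl
    exact h0 (pow_eq_zero_iff three_ne_zero |>.1 (by linear_combination -hQ))
  have hQB : Q ≠ B := by
    rintro rfl
    exact mul_ne_zero hQ0 h0 (by linear_combination -hQ - hB)
  simp [hQ0, hQ1, hQt, hQB]

end

/-- Over `ℚ(t)`, with `A = 1/(1−t)`, `B = −t/(t² − t − 1)`, `Q = t/(1−t²)`: the orbit of `0`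
under `φ` is the 4-cycle `0 ↦ 1 ↦ t ↦ B ↦ 0`, and `φ(∞) = 0`, `φ(A) = B`, `φ(Q) = t`,
while `∞`, `A`, `Q` are not in the 4-cycle `{0, 1, t, B}`. -/
theorem stmt_17 :
    ∀ (t A B Q : RatFunc ℚ), t = RatFunc.X →
      A = 1/(1 - t) → B = -t/(t^2 - t - 1) → Q = t/(1 - t^2) →
      phiT t (some 0) = some 1 ∧
      phiT t (some 1) = some t ∧
      phiT t (some t) = some B ∧
      phiT t (some B) = some 0 ∧
      ([some 0, some 1, some t, some B] : List (Option (RatFunc ℚ))).Pairwise (· ≠ ·) ∧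
      phiT t none = some 0 ∧
      phiT t (some A) = some B ∧
      phiT t (some Q) = some t ∧
      (none : Option (RatFunc ℚ)) ∉ ({some 0, some 1, some t, some B} : Set (Option (RatFunc ℚ))) ∧
      some A ∉ ({some 0, some 1, some t, some B} : Set (Option (RatFunc ℚ))) ∧
      some Q ∉ ({some 0, some 1, some t, some B} : Set (Option (RatFunc ℚ))) := by
  rintro t A B Q rfl rfl rfl rfl
  have h0 : (RatFunc.X : RatFunc ℚ) ≠ 0 := RatFunc.X_ne_zero
  have h2 : (RatFunc.X : RatFunc ℚ) ^ 2 ≠ 1 := by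
    simpa [sub_eq_zero] using RatFunc.algebraMap_ne_zero
      (show Monic (X ^ 2 - 1 : ℚ[X]) by monicity!).ne_zero
  have hs : (RatFunc.X : RatFunc ℚ) ^ 2 - RatFunc.X - 1 ≠ 0 := by
    simpa using RatFunc.algebraMap_ne_zero
      (show Monic (X ^ 2 - X - 1 : ℚ[X]) by monicity!).ne_zero
  have hA' : (RatFunc.X : RatFunc ℚ) ^ 2 - RatFunc.X + 1 ≠ 0 := by
    simpa using RatFunc.algebraMap_ne_zero
      (show Monic (X ^ 2 - X + 1 : ℚ[X]) by monicity!).ne_zero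
  have hQ' : (RatFunc.X : RatFunc ℚ) ^ 2 + RatFunc.X - 1 ≠ 0 := by
    simpa using RatFunc.algebraMap_ne_zero
      (show Monic (X ^ 2 + X - 1 : ℚ[X]) by monicity!).ne_zero
  have h1 : (RatFunc.X : RatFunc ℚ) ≠ 1 := fun h => h2 (by rw [h, one_pow])
  have hA := one_div_mul_cancel (sub_ne_zero.2 h1.symm)
  have hB := div_mul_cancel₀ (-RatFunc.X) hs
  have hQ := div_mul_cancel₀ RatFunc.X (sub_ne_zero.2 h2.symm)
  exact ⟨phiT_zero h0, phiT_one h2, phiT_self h0 h1 hB, phiT_eq_zero_of_mul_eq_neg h0 h2 hB,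
    pairwise_ne_cycle h0 h2 hB, rfl, phiT_of_mul_one_sub_eq_one h0 hA hB,
    phiT_of_mul_one_sub_sq_eq_self h0 hQ, by simp,
    some_notMem_cycle_of_mul_one_sub_eq_one h0 hA' hA hB,
    some_notMem_cycle_of_mul_one_sub_sq_eq_self h0 hQ' hQ hB⟩

end
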